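/- arXiv:1805.04577 — 6 statements merged into one kernel-verified Lean document; each statement's English description precedes it below -/
import Mathlib

section
/- Suppose P : W → ℝ satisfies the error bound condition EBC(θ, α), i.e., for every w in W, ‖w - w*‖² ≤ α (P(w) - P(w*))^θ where w* is the closest minimizer of P in W, and suppose f(·, z) is G-Lipschitz for every z with P(w) = E_z[f(w,z)]. Then for every w in W, E_z[(f(w,z) - f(w*,z))²] ≤ G²·α · (E_z[f(w,z) - f(w*,z)])^θ, i.e., a relaxed Bernstein condition holds with constant B = G²α. -/
/-!
The Lipschitz bound controls the excess loss pointwise, `(f(w,z) - f(w*,z))² ≤ G² ‖w - w*‖²`,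
and the error bound condition converts `‖w - w*‖²` into `α (P w - P w*)^θ`, where
`P w - P w*` is the mean excess loss.
-/

open MeasureTheory

theorem integral_sq_le_sq_of_abs_le {Z : Type*} [MeasurableSpace Z] {μ : Measure Z}
    [IsProbabilityMeasure μ] {X : Z → ℝ} {c : ℝ} (hX : ∀ z, |X z| ≤ c) :
    ∫ z, X z ^ 2 ∂μ ≤ c ^ 2 := by
  calc ∫ z, X z ^ 2 ∂μ ≤ ∫ _, c ^ 2 ∂μ :=
        integral_mono_of_nonneg (.of_forall fun z => sq_nonneg (X z)) (integrable_const _)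
          (.of_forall fun z => sq_le_sq' (abs_le.mp (hX z)).1 (abs_le.mp (hX z)).2)
    _ = c ^ 2 := by simp

theorem integral_sq_sub_le_of_abs_sub_le {E Z : Type*} [SeminormedAddCommGroup E]
    [MeasurableSpace Z] {μ : Measure Z} [IsProbabilityMeasure μ] {f : E → Z → ℝ} {G : ℝ}
    {w u : E} (hLip : ∀ z, |f w z - f u z| ≤ G * ‖w - u‖) :
    ∫ z, (f w z - f u z) ^ 2 ∂μ ≤ G ^ 2 * ‖w - u‖ ^ 2 := by
  simpa only [mul_pow] using integral_sq_le_sq_of_abs_le hLip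

theorem stmt0_general {d : ℕ} {Z : Type*} [MeasurableSpace Z] (μ : Measure Z) [IsProbabilityMeasure μ]
    (W : Set (EuclideanSpace ℝ (Fin d)))
    (f : EuclideanSpace ℝ (Fin d) → Z → ℝ)
    (P : EuclideanSpace ℝ (Fin d) → ℝ)
    (proj : EuclideanSpace ℝ (Fin d) → EuclideanSpace ℝ (Fin d))
    (G α θ : ℝ)
    (hP : ∀ w, P w = ∫ z, f w z ∂μ)
    (hint : ∀ w, Integrable (fun z => f w z) μ)
    (hEBC : ∀ w ∈ W, ‖w - proj w‖ ^ 2 ≤ α * (P w - P (proj w)) ^ θ)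
    (hLip : ∀ z, ∀ w u, |f w z - f u z| ≤ G * ‖w - u‖) :
    ∀ w ∈ W,
      ∫ z, (f w z - f (proj w) z) ^ 2 ∂μ ≤
        G ^ 2 * α * (∫ z, (f w z - f (proj w) z) ∂μ) ^ θ := by
  intro w hw
  have hmean : ∫ z, (f w z - f (proj w) z) ∂μ = P w - P (proj w) := by
    rw [integral_sub (hint w) (hint (proj w)), hP, hP]
  calc ∫ z, (f w z - f (proj w) z) ^ 2 ∂μ ≤ G ^ 2 * ‖w - proj w‖ ^ 2 :=
        integral_sq_sub_le_of_abs_sub_le fun z => hLip z w (proj w)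
    _ ≤ G ^ 2 * (α * (P w - P (proj w)) ^ θ) := by gcongr; exact hEBC w hw
    _ = G ^ 2 * α * (∫ z, (f w z - f (proj w) z) ∂μ) ^ θ := by rw [hmean, mul_assoc]

theorem stmt0 {d : ℕ} {Z : Type*} [MeasurableSpace Z] (μ : Measure Z) [IsProbabilityMeasure μ]
    (W : Set (EuclideanSpace ℝ (Fin d)))
    (f : EuclideanSpace ℝ (Fin d) → Z → ℝ)
    (P : EuclideanSpace ℝ (Fin d) → ℝ)
    (proj : EuclideanSpace ℝ (Fin d) → EuclideanSpace ℝ (Fin d))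
    (Wstar : Set (EuclideanSpace ℝ (Fin d)))
    (G α θ : ℝ) (hG : 0 < G) (hα : 0 < α) (hθ : θ ∈ Set.Ioc (0:ℝ) 1)
    (hWcomp : IsCompact W) (hWconv : Convex ℝ W)
    (hP : ∀ w, P w = ∫ z, f w z ∂μ)
    (hint : ∀ w, Integrable (fun z => f w z) μ)
    (hint2 : ∀ w u, Integrable (fun z => (f w z - f u z) ^ 2) μ)
    (hWstar : Wstar = {u ∈ W | ∀ u' ∈ W, P u ≤ P u'})
    (hproj : ∀ w ∈ W, proj w ∈ Wstar ∧ ∀ u ∈ Wstar, ‖w - proj w‖ ≤ ‖w - u‖)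
    (hEBC : ∀ w ∈ W, ‖w - proj w‖ ^ 2 ≤ α * (P w - P (proj w)) ^ θ)
    (hLip : ∀ z, ∀ w u, |f w z - f u z| ≤ G * ‖w - u‖) :
    ∀ w ∈ W,
      ∫ z, (f w z - f (proj w) z) ^ 2 ∂μ ≤
        G ^ 2 * α * (∫ z, (f w z - f (proj w) z) ∂μ) ^ θ :=
  stmt0_general μ W f P proj G α θ hP hint hEBC hLip
end

section
/- Let X be a bounded random variable with |X| ≤ a almost surely, E[X] ≥ 0, and Var(X) ≤ B (E[X])^θ for some θ ∈ (0,1] and B > 0. Fix b > 0, let κ(x) = (e^x - x - 1)/x² (with κ(0) = 1/2), c = 1/(B κ(2ba)), and for ε > 0 set η = min(c ε^{1-θ}, b). Then E[e^{-ηX}] ≤ e^{ηε}. -/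
/-!
Let `m = E[X]` and `κ = κ(2ba)`. Comparing the exponential series term by term from the quadratic
term on gives `exp y ≤ 1 + y + κ(d) y²` for `|y| ≤ d`. Since `|η (X - m)| ≤ 2ba`, this yields the
Bernstein bound `E[exp (-ηX)] ≤ exp (-ηm) (1 + κ η² Var X) ≤ exp (-ηm + κ η² Var X)`.
The variance hypothesis and `η ≤ c ε^(1-θ)` give `κ η² Var X ≤ η ε^(1-θ) m^θ`, and weighted
AM-GM bounds `ε^(1-θ) m^θ ≤ ε + m`, so the exponent is at most `ηε`.
-/

open MeasureTheory ProbabilityTheory Real Nat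

lemma hasSum_pow_add_two_div_factorial (x : ℝ) :
    HasSum (fun n ↦ x ^ (n + 2) / (n + 2)!) (exp x - x - 1) := by
  have h := NormedSpace.expSeries_div_hasSum_exp x
  rw [← exp_eq_exp_ℝ, ← hasSum_nat_add_iff' 2] at h
  rwa [Finset.sum_range_succ, Finset.sum_range_one, pow_zero, pow_one, factorial_zero,
    factorial_one, cast_one, div_one, div_one, ← sub_sub, sub_right_comm] at h

lemma exp_le_one_add_add_mul_sq {d y : ℝ} (hd : 0 < d) (hy : |y| ≤ d) :
    exp y ≤ 1 + y + (exp d - d - 1) / d ^ 2 * y ^ 2 := by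
  have hle : ∀ n : ℕ, y ^ (n + 2) / (n + 2)! ≤ y ^ 2 / d ^ 2 * (d ^ (n + 2) / (n + 2)!) := by
    intro n
    rw [← mul_div_assoc]
    gcongr
    calc y ^ (n + 2) = y ^ 2 * y ^ n := by ring
      _ ≤ y ^ 2 * d ^ n := by
          refine mul_le_mul_of_nonneg_left ((le_abs_self _).trans ?_) (sq_nonneg y)
          rw [abs_pow]
          exact pow_le_pow_left₀ (abs_nonneg y) hy n
      _ = y ^ 2 / d ^ 2 * d ^ (n + 2) := by field_simp; ring
  have hsum := hasSum_le hle (hasSum_pow_add_two_div_factorial y)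
    ((hasSum_pow_add_two_div_factorial d).mul_left (y ^ 2 / d ^ 2))
  rw [div_mul_comm] at hsum
  linarith

lemma integral_exp_mul_le {Ω : Type*} [MeasurableSpace Ω] {μ : Measure Ω} [IsProbabilityMeasure μ]
    {X : Ω → ℝ} (hX : MemLp X 2 μ) {t d : ℝ} (hd : 0 < d)
    (hbdd : ∀ᵐ ω ∂μ, |t * (X ω - μ[X])| ≤ d) :
    μ[fun ω ↦ exp (t * X ω)] ≤ exp (t * μ[X] + (exp d - d - 1) / d ^ 2 * t ^ 2 * Var[X; μ]) := by
  set m := μ[X]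
  set K := (exp d - d - 1) / d ^ 2
  have hpt : ∀ᵐ ω ∂μ,
      exp (t * X ω) ≤ exp (t * m) * (1 + t * (X ω - m) + K * t ^ 2 * (X ω - m) ^ 2) := by
    filter_upwards [hbdd] with ω hω
    have hexp := exp_le_one_add_add_mul_sq hd hω
    rw [mul_pow, ← mul_assoc] at hexp
    rw [show t * X ω = t * m + t * (X ω - m) by ring, exp_add]
    gcongr
  have hdev : Integrable (fun ω ↦ X ω - m) μ :=
    (hX.integrable one_le_two).sub (integrable_const m)
  have hlin : Integrable (fun ω ↦ 1 + t * (X ω - m)) μ :=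
    (integrable_const 1).add (hdev.const_mul t)
  have hquad : Integrable (fun ω ↦ K * t ^ 2 * (X ω - m) ^ 2) μ :=
    (hX.sub (memLp_const m)).integrable_sq.const_mul _
  have hmean_zero : ∫ ω, (X ω - m) ∂μ = 0 := by
    rw [integral_sub (hX.integrable one_le_two) (integrable_const m)]
    simp [m]
  calc μ[fun ω ↦ exp (t * X ω)]
      ≤ ∫ ω, exp (t * m) * (1 + t * (X ω - m) + K * t ^ 2 * (X ω - m) ^ 2) ∂μ :=
        integral_mono_of_nonneg (f := fun ω ↦ exp (t * X ω))
          (ae_of_all _ fun _ ↦ (exp_pos _).le) ((hlin.add hquad).const_mul _) hpt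
    _ = exp (t * m) * (1 + K * t ^ 2 * Var[X; μ]) := by
        rw [integral_const_mul, integral_add hlin hquad,
          integral_add (integrable_const 1) (hdev.const_mul t),
          integral_const_mul, integral_const_mul, hmean_zero,
          variance_eq_integral hX.aestronglyMeasurable.aemeasurable]
        simp [m]
    _ ≤ exp (t * m) * exp (K * t ^ 2 * Var[X; μ]) := by
        gcongr
        linarith [add_one_le_exp (K * t ^ 2 * Var[X; μ])]
    _ = exp (t * m + K * t ^ 2 * Var[X; μ]) := (exp_add _ _).symm

lemma rpow_one_sub_mul_rpow_le_add {x y θ : ℝ} (hx : 0 ≤ x) (hy : 0 ≤ y)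
    (hθ : θ ∈ Set.Icc (0 : ℝ) 1) :
    x ^ (1 - θ) * y ^ θ ≤ x + y := by
  have := geom_mean_le_arith_mean2_weighted (sub_nonneg.2 hθ.2) hθ.1 hx hy (sub_add_cancel 1 θ)
  nlinarith [hθ.1, hθ.2]

lemma mul_sq_mul_le_mul_add {K B θ ε m V η : ℝ} (hK : 0 < K) (hB : 0 < B)
    (hθ : θ ∈ Set.Icc (0 : ℝ) 1) (hε : 0 ≤ ε) (hm : 0 ≤ m) (hV : V ≤ B * m ^ θ) (hη : 0 ≤ η)
    (hηε : η ≤ ε ^ (1 - θ) / (B * K)) :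
    K * η ^ 2 * V ≤ η * (ε + m) := by
  have hηBK : η * (B * K) ≤ ε ^ (1 - θ) := (le_div_iff₀ (by positivity)).1 hηε
  calc K * η ^ 2 * V ≤ K * η ^ 2 * (B * m ^ θ) := by gcongr
    _ = η * (η * (B * K)) * m ^ θ := by ring
    _ ≤ η * ε ^ (1 - θ) * m ^ θ := by gcongr
    _ ≤ η * (ε + m) := by
        rw [mul_assoc]
        exact mul_le_mul_of_nonneg_left (rpow_one_sub_mul_rpow_le_add hε hm hθ) hη

theorem stmt1 {Ω : Type*} [MeasurableSpace Ω] (μ : Measure Ω) [IsProbabilityMeasure μ]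
    (X : Ω → ℝ) (a B θ b ε : ℝ)
    (ha : 0 < a) (hB : 0 < B) (hθ : θ ∈ Set.Ioc (0:ℝ) 1) (hb : 0 < b) (hε : 0 < ε)
    (hmeas : Measurable X)
    (hbdd : ∀ᵐ ω ∂μ, |X ω| ≤ a)
    (hmean : 0 ≤ ∫ ω, X ω ∂μ)
    (hvar : ∫ ω, (X ω - ∫ ω', X ω' ∂μ) ^ 2 ∂μ ≤ B * (∫ ω, X ω ∂μ) ^ θ) :
    ∀ κ : ℝ → ℝ, (κ = fun x => if x = 0 then 1/2 else (Real.exp x - x - 1) / x ^ 2) →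
    ∀ c : ℝ, c = 1 / (B * κ (2 * b * a)) →
    ∀ η : ℝ, η = min (c * ε ^ (1 - θ)) b →
      ∫ ω, Real.exp (-η * X ω) ∂μ ≤ Real.exp (η * ε) := by
  intro κ hκ c hc η hη
  have hd : 0 < 2 * b * a := by positivity
  set K := (exp (2 * b * a) - 2 * b * a - 1) / (2 * b * a) ^ 2
  have hK : 0 < K := div_pos (by linarith [add_one_lt_exp hd.ne']) (by positivity)
  have hc' : c * ε ^ (1 - θ) = ε ^ (1 - θ) / (B * K) := by simp [hc, hκ, hd.ne', K, div_eq_inv_mul]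
  have hη_nonneg : 0 ≤ η := hη ▸ le_min (by rw [hc']; positivity) hb.le
  have hX : MemLp X 2 μ := MemLp.of_bound hmeas.aestronglyMeasurable a (by simpa using hbdd)
  have hmean_le : |μ[X]| ≤ a := by
    simpa using norm_integral_le_of_norm_le_const (μ := μ) (f := X) (by simpa using hbdd)
  have hdev_bdd : ∀ᵐ ω ∂μ, |-η * (X ω - μ[X])| ≤ 2 * b * a := by
    filter_upwards [hbdd] with ω hω
    rw [abs_mul, abs_neg, abs_of_nonneg hη_nonneg]
    calc η * |X ω - μ[X]| ≤ b * (a + a) :=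
          mul_le_mul (hη ▸ min_le_right _ _) ((abs_sub _ _).trans (add_le_add hω hmean_le))
            (abs_nonneg _) hb.le
      _ = 2 * b * a := by ring
  have hpenalty := mul_sq_mul_le_mul_add hK hB (Set.Ioc_subset_Icc_self hθ) hε.le hmean
    ((variance_eq_integral hmeas.aemeasurable).trans_le hvar) hη_nonneg
    (hc' ▸ hη ▸ min_le_left _ _)
  calc ∫ ω, exp (-η * X ω) ∂μ ≤ exp (-η * μ[X] + K * (-η) ^ 2 * Var[X; μ]) :=
        integral_exp_mul_le hX hd hdev_bdd
    _ ≤ exp (η * ε) := exp_le_exp.2 (by rw [neg_sq]; linarith)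
end

section
/- Suppose the error bound condition holds: ‖w - w*‖₂^{2/θ} ≤ α^{1/θ} (P(w) - P*) for all w ∈ W, where θ ∈ (0,1], α > 0, w* is the closest minimizer, and P* = min P. Then for any A ≥ 0, ε > 0, and w ∈ W: ‖w - w*‖₂ · √A ≤ max(1, α^{1/θ}/(4ε)) · A^{1/(2-θ)} + ε (P(w) - P*). -/
/-!
Put `r = ‖w - w*‖`, `β = α^{1/θ}`, `p = 2/θ`, `q = 2/(2-θ)`; then `1/p + 1/q = 1`, and
`A^{1/(2-θ)} = (√A)^q`. Young's inequality with weight `ε/β` on `r^p` bounds `r √A` by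
`(ε/β) r^p + K (√A)^q`, and the error bound condition turns `(ε/β) r^p` into `ε (P(w) - P*)`.
The Young constant is `K = x^{θ/(2-θ)} / q` with `x = θβ/(2ε)`; since `θ/(2-θ) ≤ 1` it is at
most `max 1 x / q`, and `θ(2-θ) ≤ 1` gives `K ≤ max 1 (β/(4ε))`.
-/

open Real

lemma Real.rpow_le_max_one_self {x t : ℝ} (hx : 0 ≤ x) (ht₀ : 0 ≤ t) (ht₁ : t ≤ 1) :
    x ^ t ≤ max 1 x := by
  rcases le_total x 1 with hx₁ | hx₁
  · exact (rpow_le_one hx hx₁ ht₀).trans (le_max_left _ _)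
  · exact (rpow_le_self_of_one_le hx₁ ht₁).trans (le_max_right _ _)

lemma Real.mul_le_weighted_young {a b c p q : ℝ} (ha : 0 ≤ a) (hb : 0 ≤ b) (hc : 0 < c)
    (hpq : p.HolderConjugate q) :
    a * b ≤ c * a ^ p + (p * c)⁻¹ ^ (q / p) / q * b ^ q := by
  have hpc : 0 < p * c := mul_pos hpq.pos hc
  set s := (p * c) ^ p⁻¹ with hs
  have hs₀ : 0 < s := rpow_pos_of_pos hpc _
  have hsp : s ^ p = p * c := by
    rw [hs, ← rpow_mul hpc.le, inv_mul_cancel₀ hpq.ne_zero, rpow_one]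
  have hsq : (s ^ q)⁻¹ = (p * c)⁻¹ ^ (q / p) := by
    rw [hs, ← rpow_mul hpc.le, inv_rpow hpc.le, inv_mul_eq_div]
  calc a * b = (s * a) * (b / s) := by field_simp
    _ ≤ (s * a) ^ p / p + (b / s) ^ q / q :=
      young_inequality_of_nonneg (by positivity) (by positivity) hpq
    _ = c * a ^ p + (p * c)⁻¹ ^ (q / p) / q * b ^ q := by
      rw [mul_rpow hs₀.le ha, div_rpow hb hs₀.le, hsp, ← hsq]
      field_simp [hpq.ne_zero]

lemma Real.holderConjugate_two_div {θ : ℝ} (hθ₀ : 0 < θ) (hθ₂ : θ < 2) :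
    (2 / θ).HolderConjugate (2 / (2 - θ)) := by
  have h : 0 < 2 - θ := by linarith
  refine holderConjugate_iff.mpr ⟨by rw [lt_div_iff₀ hθ₀]; linarith, ?_⟩
  field_simp
  ring

lemma mul_sqrt_le_max_one_mul_rpow_add_mul_rpow {θ β ε r A : ℝ} (hθ : θ ∈ Set.Ioc 0 1)
    (hβ : 0 < β) (hε : 0 < ε) (hr : 0 ≤ r) (hA : 0 ≤ A) :
    r * √A ≤ max 1 (β / (4 * ε)) * A ^ (1 / (2 - θ)) + ε / β * r ^ (2 / θ) := by
  obtain ⟨hθ₀, hθ₁⟩ := hθ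
  have h2θ : 0 < 2 - θ := by linarith
  have hyoung := mul_le_weighted_young hr (sqrt_nonneg A) (div_pos hε hβ)
    (holderConjugate_two_div hθ₀ (by linarith))
  have hsqrt : √A ^ (2 / (2 - θ)) = A ^ (1 / (2 - θ)) := by
    rw [sqrt_eq_rpow, ← rpow_mul hA]
    ring_nf
  have hexp : 2 / (2 - θ) / (2 / θ) = θ / (2 - θ) := by
    field_simp
  have hbase : (2 / θ * (ε / β))⁻¹ = θ * β / (2 * ε) := by
    field_simp
  have hconst : (2 / θ * (ε / β))⁻¹ ^ (2 / (2 - θ) / (2 / θ)) / (2 / (2 - θ))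
      ≤ max 1 (β / (4 * ε)) := by
    rw [hexp, hbase]
    calc (θ * β / (2 * ε)) ^ (θ / (2 - θ)) / (2 / (2 - θ))
        ≤ max 1 (θ * β / (2 * ε)) / (2 / (2 - θ)) := by
          gcongr
          exact rpow_le_max_one_self (by positivity) (by positivity)
            (by rw [div_le_one h2θ]; linarith)
      _ = max ((2 - θ) / 2) (θ * (2 - θ) * (β / (4 * ε))) := by
          rw [← max_div_div_right (by positivity)]
          congr 1
          · field_simp
          · field_simp
            ring
      _ ≤ max 1 (β / (4 * ε)) := by
          gcongr
          · linarith
          · exact mul_le_of_le_one_left (by positivity) (by nlinarith [sq_nonneg (1 - θ)])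
  calc r * √A ≤ ε / β * r ^ (2 / θ) + _ * √A ^ (2 / (2 - θ)) := hyoung
    _ ≤ ε / β * r ^ (2 / θ) + max 1 (β / (4 * ε)) * A ^ (1 / (2 - θ)) := by
      rw [hsqrt]
      gcongr
    _ = _ := add_comm _ _

theorem stmt3_general {d : ℕ} (W : Set (EuclideanSpace ℝ (Fin d)))
    (P : EuclideanSpace ℝ (Fin d) → ℝ)
    (proj : EuclideanSpace ℝ (Fin d) → EuclideanSpace ℝ (Fin d))
    (Pstar θ α : ℝ)
    (hθ : θ ∈ Set.Ioc (0:ℝ) 1) (hα : 0 < α)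
    (hEBC : ∀ w ∈ W, ‖w - proj w‖ ^ (2 / θ) ≤ α ^ (1 / θ) * (P w - Pstar)) :
    ∀ A : ℝ, 0 ≤ A → ∀ ε : ℝ, 0 < ε → ∀ w ∈ W,
      ‖w - proj w‖ * Real.sqrt A ≤
        max 1 (α ^ (1 / θ) / (4 * ε)) * A ^ (1 / (2 - θ)) + ε * (P w - Pstar) := by
  intro A hA ε hε w hw
  have hβ : 0 < α ^ (1 / θ) := rpow_pos_of_pos hα _
  have hyoung := mul_sqrt_le_max_one_mul_rpow_add_mul_rpow hθ hβ hε (norm_nonneg (w - proj w)) hA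
  have hebc : ε / α ^ (1 / θ) * ‖w - proj w‖ ^ (2 / θ) ≤ ε * (P w - Pstar) :=
    calc ε / α ^ (1 / θ) * ‖w - proj w‖ ^ (2 / θ)
        ≤ ε / α ^ (1 / θ) * (α ^ (1 / θ) * (P w - Pstar)) := by gcongr; exact hEBC w hw
      _ = ε * (P w - Pstar) := by field_simp
  linarith

theorem stmt3 {d : ℕ} (W : Set (EuclideanSpace ℝ (Fin d)))
    (P : EuclideanSpace ℝ (Fin d) → ℝ)
    (proj : EuclideanSpace ℝ (Fin d) → EuclideanSpace ℝ (Fin d))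
    (Pstar θ α : ℝ)
    (hθ : θ ∈ Set.Ioc (0:ℝ) 1) (hα : 0 < α)
    (hPstar : ∀ w ∈ W, Pstar ≤ P w)
    (hEBC : ∀ w ∈ W, ‖w - proj w‖ ^ (2 / θ) ≤ α ^ (1 / θ) * (P w - Pstar)) :
    ∀ A : ℝ, 0 ≤ A → ∀ ε : ℝ, 0 < ε → ∀ w ∈ W,
      ‖w - proj w‖ * Real.sqrt A ≤
        max 1 (α ^ (1 / θ) / (4 * ε)) * A ^ (1 / (2 - θ)) + ε * (P w - Pstar) :=
  stmt3_general W P proj Pstar θ α hθ hα hEBC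
end

section
/- Consider the constrained problem min_{‖w‖₂ ≤ B} P(w) where P : ℝ^d → ℝ is convex and differentiable, B > 0, and assume min_{w ∈ ℝ^d} P(w) < min_{‖w‖₂ ≤ B} P(w). Then there exists λ > 0 and the unique constrained minimizer w* satisfies ‖w*‖₂ = B, w* is the unique global minimizer of P_λ(w) = P(w) + λ(‖w‖₂² - B²), and there exists μ > 0 such that ‖w - w*‖₂² ≤ μ²(P(w) - P(w*)) for all w with ‖w‖₂ ≤ B. That is, the problem satisfies EBC(θ = 1, μ²). -/
/-!
The directional optimality condition `⟪∇P w*, v - w*⟫ ≥ 0` on the ball, tested at the point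
`v = -B ∇P(w*) / ‖∇P(w*)‖`, forces `w* = v`: the minimizer lies on the sphere and the gradient is an
inward normal, `∇P(w*) = -2λ w*` with `λ = ‖∇P(w*)‖ / (2B) > 0` (the gradient does not vanish, since
`P` is convex and `w*` is not a global minimizer). The first-order convexity inequality at `w*` then
gives `P(w) + λ(‖w‖² - B²) ≥ P(w*) + λ‖w - w*‖²`, from which the strict minimality of the
Lagrangian, uniqueness, and quadratic growth on the ball all follow.
-/

open Set Metric InnerProductSpace
open scoped RealInnerProductSpace Gradient

variable {E : Type*} [NormedAddCommGroup E] [InnerProductSpace ℝ E]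

lemma eq_of_norm_le_of_sq_norm_le_inner {x y : E} (hnorm : ‖x‖ ≤ ‖y‖) (hinner : ‖y‖ ^ 2 ≤ ⟪x, y⟫) :
    x = y := by
  have hxy : ‖x - y‖ ^ 2 ≤ 0 := by
    rw [norm_sub_sq_real]
    nlinarith [norm_nonneg x]
  rw [← sub_eq_zero, ← norm_eq_zero]
  exact pow_eq_zero_iff two_ne_zero |>.mp (le_antisymm hxy (sq_nonneg _))

variable [CompleteSpace E] {f : E → ℝ} {x : E}

lemma inner_gradient_eq_fderiv (f : E → ℝ) (x v : E) : ⟪∇ f x, v⟫ = fderiv ℝ f x v := by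
  rw [← toDual_gradient, toDual_apply_apply]

lemma ConvexOn.inner_gradient_sub_le (hf : ConvexOn ℝ univ f) (hx : DifferentiableAt ℝ f x)
    (y : E) : ⟪∇ f x, y - x⟫ ≤ f y - f x := by
  have hline : ConvexOn ℝ univ (f ∘ AffineMap.lineMap (k := ℝ) x y) := by
    simpa using hf.comp_affineMap (AffineMap.lineMap (k := ℝ) x y)
  have hderiv : HasDerivAt (f ∘ AffineMap.lineMap (k := ℝ) x y) ⟪∇ f x, y - x⟫ 0 := by
    rw [inner_gradient_eq_fderiv]
    refine HasFDerivAt.comp_hasDerivAt (x := (0 : ℝ)) ?_ AffineMap.hasDerivAt_lineMap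
    simpa using hx.hasFDerivAt
  simpa [slope_def_field] using
    hline.le_slope_of_hasDerivAt (mem_univ 0) (mem_univ 1) one_pos hderiv

lemma ConvexOn.gradient_ne_zero_of_lt {y : E} (hf : ConvexOn ℝ univ f)
    (hx : DifferentiableAt ℝ f x) (hy : f y < f x) : ∇ f x ≠ 0 := by
  intro hzero
  have := hf.inner_gradient_sub_le hx y
  rw [hzero, inner_zero_left] at this
  linarith

lemma IsMinOn.inner_gradient_sub_nonneg {s : Set E} {y : E} (h : IsMinOn f s x) (hs : Convex ℝ s)
    (hxs : x ∈ s) (hys : y ∈ s) (hx : DifferentiableAt ℝ f x) : 0 ≤ ⟪∇ f x, y - x⟫ := by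
  rw [inner_gradient_eq_fderiv]
  exact (h.localize.on_subset subset_rfl).hasFDerivWithinAt_nonneg hx.hasFDerivAt.hasFDerivWithinAt
    (sub_mem_posTangentConeAt_of_segment_subset (hs.segment_subset hxs hys))

lemma IsMinOn.eq_neg_smul_gradient_of_closedBall {B : ℝ} (h : IsMinOn f (closedBall 0 B) x)
    (hxB : x ∈ closedBall 0 B) (hx : DifferentiableAt ℝ f x) (hgrad : ∇ f x ≠ 0) :
    x = -(B / ‖∇ f x‖) • ∇ f x := by
  set g := ∇ f x
  have hB : 0 ≤ B := nonneg_of_mem_closedBall hxB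
  have hg : 0 < ‖g‖ := norm_pos_iff.mpr hgrad
  have hnorm : ‖-(B / ‖g‖) • g‖ = B := by
    rw [norm_smul, norm_neg, Real.norm_of_nonneg (by positivity), div_mul_cancel₀ _ hg.ne']
  have hopt := h.inner_gradient_sub_nonneg (convex_closedBall 0 B) hxB
    (mem_closedBall_zero_iff.mpr hnorm.le) hx
  have hgx : ⟪g, x⟫ ≤ -(B * ‖g‖) := by
    rw [inner_sub_right, inner_smul_right, real_inner_self_eq_norm_sq] at hopt
    have : B / ‖g‖ * ‖g‖ ^ 2 = B * ‖g‖ := by field_simp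
    linarith
  refine eq_of_norm_le_of_sq_norm_le_inner (hnorm.symm ▸ mem_closedBall_zero_iff.mp hxB) ?_
  rw [hnorm, inner_smul_right, real_inner_comm]
  calc B ^ 2 = -(B / ‖g‖) * -(B * ‖g‖) := by field_simp
    _ ≤ -(B / ‖g‖) * ⟪g, x⟫ := mul_le_mul_of_nonpos_left hgx (by simp only [neg_nonpos]; positivity)

lemma IsMinOn.norm_eq_of_closedBall {B : ℝ} (h : IsMinOn f (closedBall 0 B) x)
    (hxB : x ∈ closedBall 0 B) (hx : DifferentiableAt ℝ f x) (hgrad : ∇ f x ≠ 0) : ‖x‖ = B := by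
  rw [h.eq_neg_smul_gradient_of_closedBall hxB hx hgrad, norm_smul, norm_neg,
    Real.norm_of_nonneg (div_nonneg (nonneg_of_mem_closedBall hxB) (norm_nonneg _)),
    div_mul_cancel₀ _ (norm_ne_zero_iff.mpr hgrad)]

lemma IsMinOn.gradient_eq_smul_of_closedBall {B : ℝ} (hB : 0 < B)
    (h : IsMinOn f (closedBall 0 B) x) (hxB : x ∈ closedBall 0 B) (hx : DifferentiableAt ℝ f x)
    (hgrad : ∇ f x ≠ 0) : ∇ f x = -(2 * (‖∇ f x‖ / (2 * B))) • x := by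
  have hx_eq := h.eq_neg_smul_gradient_of_closedBall hxB hx hgrad
  set g := ∇ f x
  have hcoef : 2 * (‖g‖ / (2 * B)) * (B / ‖g‖) = 1 := by
    field_simp [norm_ne_zero_iff.mpr hgrad]
  rw [hx_eq, smul_smul, neg_mul_neg, hcoef, one_smul]

lemma ConvexOn.add_mul_sq_norm_sub_le_of_gradient_eq {lam : ℝ} (hf : ConvexOn ℝ univ f)
    (hx : DifferentiableAt ℝ f x) (hgrad : ∇ f x = -(2 * lam) • x) (w : E) :
    f x + lam * ‖w - x‖ ^ 2 ≤ f w + lam * (‖w‖ ^ 2 - ‖x‖ ^ 2) := by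
  have hfo := hf.inner_gradient_sub_le hx w
  have hsq : ‖w‖ ^ 2 - ‖x‖ ^ 2 = ‖w - x‖ ^ 2 + 2 * ⟪x, w - x⟫ := by
    rw [norm_sub_sq_real, inner_sub_right, real_inner_self_eq_norm_sq, real_inner_comm]
    ring
  rw [hgrad, inner_smul_left, RCLike.conj_to_real] at hfo
  rw [hsq]
  linarith

theorem stmt7 {d : ℕ} (P : EuclideanSpace ℝ (Fin d) → ℝ) (B : ℝ)
    (wstar : EuclideanSpace ℝ (Fin d)) (hB : 0 < B)
    (hconv : ConvexOn ℝ Set.univ P) (hdiff : Differentiable ℝ P)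
    (hmem : ‖wstar‖ ≤ B) (hmin : ∀ w, ‖w‖ ≤ B → P wstar ≤ P w)
    (hlt : ∃ w0, P w0 < P wstar) :
    ‖wstar‖ = B ∧
    (∀ w, ‖w‖ ≤ B → P w = P wstar → w = wstar) ∧
    (∃ lam : ℝ, 0 < lam ∧
      ∀ w, w ≠ wstar →
        P wstar + lam * (‖wstar‖ ^ 2 - B ^ 2) < P w + lam * (‖w‖ ^ 2 - B ^ 2)) ∧
    (∃ μ : ℝ, 0 < μ ∧ ∀ w, ‖w‖ ≤ B → ‖w - wstar‖ ^ 2 ≤ μ ^ 2 * (P w - P wstar)) := by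
  obtain ⟨w0, hw0⟩ := hlt
  have hminOn : IsMinOn P (closedBall 0 B) wstar := fun w hw ↦
    hmin w (mem_closedBall_zero_iff.mp hw)
  have hball : wstar ∈ closedBall 0 B := mem_closedBall_zero_iff.mpr hmem
  have hg := hconv.gradient_ne_zero_of_lt (hdiff wstar) hw0
  have hnorm := hminOn.norm_eq_of_closedBall hball (hdiff wstar) hg
  set lam := ‖∇ P wstar‖ / (2 * B)
  have hlam : 0 < lam := div_pos (norm_pos_iff.mpr hg) (by positivity)
  have hL := hconv.add_mul_sq_norm_sub_le_of_gradient_eq (hdiff wstar)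
    (hminOn.gradient_eq_smul_of_closedBall hB hball (hdiff wstar) hg)
  rw [hnorm] at hL
  have hgrowth : ∀ w, ‖w‖ ≤ B → lam * ‖w - wstar‖ ^ 2 ≤ P w - P wstar := fun w hw ↦ by
    have : lam * (‖w‖ ^ 2 - B ^ 2) ≤ 0 :=
      mul_nonpos_of_nonneg_of_nonpos hlam.le (by nlinarith [norm_nonneg w])
    linarith [hL w]
  refine ⟨hnorm, fun w hw heq ↦ ?_, ⟨lam, hlam, fun w hne ↦ ?_⟩,
    ⟨(√lam)⁻¹, by positivity, fun w hw ↦ ?_⟩⟩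
  · have : ‖w - wstar‖ ^ 2 ≤ 0 := by nlinarith [hgrowth w hw]
    simpa [sub_eq_zero] using this
  · have : 0 < lam * ‖w - wstar‖ ^ 2 :=
      mul_pos hlam (pow_pos (norm_pos_iff.mpr (sub_ne_zero.mpr hne)) 2)
    rw [hnorm, sub_self, mul_zero, add_zero]
    linarith [hL w]
  · rw [inv_pow, Real.sq_sqrt hlam.le, ← div_eq_inv_mul, le_div_iff₀' hlam]
    exact hgrowth w hw
end

section
/- Let P, P_n : ℝ^d → ℝ where P = F + r and P_n = F_n + r with F, F_n differentiable convex, r convex, and W convex closed. Let ŵ ∈ argmin_{w∈W} P_n(w) and ŵ* a minimizer of P on W closest to ŵ. Then P(ŵ) - P(ŵ*) ≤ (‖∇F(ŵ) - ∇F(ŵ*) - [∇F_n(ŵ) - ∇F_n(ŵ*)]‖₂ + ‖∇F(ŵ*) - ∇F_n(ŵ*)‖₂) · ‖ŵ - ŵ*‖₂. -/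
/-!
Convexity of `F` at `ŵ` and the subgradient `v ∈ ∂r(ŵ)` bound the excess risk by
`⟪∇F(ŵ) + v, ŵ - ŵ*⟫`, and the first-order optimality of `ŵ` for `P_n` tested at `ŵ*` lets
`∇F_n(ŵ)` replace `v`, leaving `⟪∇F(ŵ) - ∇F_n(ŵ), ŵ - ŵ*⟫`. Splitting
`∇F(ŵ) - ∇F_n(ŵ) = [∇F(ŵ) - ∇F(ŵ*) - (∇F_n(ŵ) - ∇F_n(ŵ*))] + [∇F(ŵ*) - ∇F_n(ŵ*)]`
and applying Cauchy–Schwarz to each part gives the bound.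
-/

open InnerProductSpace

section GradientInequality

variable {E : Type*} [NormedAddCommGroup E]

lemma ConvexOn.add_apply_sub_le_of_hasFDerivAt [NormedSpace ℝ E] {f : E → ℝ} {f' : E →L[ℝ] ℝ}
    {s : Set E} {x y : E} (hf : ConvexOn ℝ s f) (hx : x ∈ s) (hy : y ∈ s)
    (hfx : HasFDerivAt f f' x) :
    f x + f' (y - x) ≤ f y := by
  let ℓ : ℝ →ᵃ[ℝ] E := AffineMap.lineMap x y
  have hℓ0 : ℓ 0 = x := AffineMap.lineMap_apply_zero x y
  have hℓ1 : ℓ 1 = y := AffineMap.lineMap_apply_one x y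
  have hderiv : HasDerivAt (f ∘ ℓ) (f' (y - x)) 0 :=
    (hℓ0 ▸ hfx).comp_hasDerivAt 0 AffineMap.hasDerivAt_lineMap
  have hslope := (hf.comp_affineMap ℓ).le_slope_of_hasDerivAt
    (by simpa [hℓ0] using hx) (by simpa [hℓ1] using hy) zero_lt_one hderiv
  simp only [slope_def_field, Function.comp_apply, hℓ0, hℓ1, sub_zero, div_one] at hslope
  linarith

lemma ConvexOn.add_inner_gradient_le [InnerProductSpace ℝ E] [CompleteSpace E] {f : E → ℝ}
    {s : Set E} {x y : E} (hf : ConvexOn ℝ s f) (hx : x ∈ s) (hy : y ∈ s)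
    (hfx : DifferentiableAt ℝ f x) :
    f x + ⟪gradient f x, y - x⟫_ℝ ≤ f y := by
  simpa using hf.add_apply_sub_le_of_hasFDerivAt hx hy hfx.hasGradientAt.hasFDerivAt

end GradientInequality

variable {E : Type*} [NormedAddCommGroup E] [InnerProductSpace ℝ E]

lemma sub_le_inner_of_subgradient_of_variational_ineq [CompleteSpace E] {F r : E → ℝ}
    {s : Set E} {a b g v : E} (hF : ConvexOn ℝ s F) (ha : a ∈ s) (hb : b ∈ s)
    (hFa : DifferentiableAt ℝ F a)
    (hv : r a + ⟪v, b - a⟫_ℝ ≤ r b) (hopt : 0 ≤ ⟪g + v, b - a⟫_ℝ) :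
    (F a + r a) - (F b + r b) ≤ ⟪gradient F a - g, a - b⟫_ℝ := by
  have hFb := hF.add_inner_gradient_le ha hb hFa
  rw [← neg_sub b a, inner_neg_right, inner_sub_left]
  rw [inner_add_left] at hopt
  linarith

lemma inner_sub_le_norm_sub_sub_add_norm_mul (p p' q q' w : E) :
    ⟪p - q, w⟫_ℝ ≤ (‖p - p' - (q - q')‖ + ‖p' - q'‖) * ‖w‖ :=
  calc ⟪p - q, w⟫_ℝ = ⟪p - p' - (q - q'), w⟫_ℝ + ⟪p' - q', w⟫_ℝ := by
        rw [← inner_add_left]; abel_nf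
    _ ≤ ‖p - p' - (q - q')‖ * ‖w‖ + ‖p' - q'‖ * ‖w‖ :=
        add_le_add (real_inner_le_norm _ _) (real_inner_le_norm _ _)
    _ = _ := (add_mul _ _ _).symm

theorem stmt11_general {d : ℕ} (W : Set (EuclideanSpace ℝ (Fin d)))
    (F Fn r : EuclideanSpace ℝ (Fin d) → ℝ)
    (what wstar : EuclideanSpace ℝ (Fin d))
    (hF : Differentiable ℝ F)
    (hFconv : ConvexOn ℝ Set.univ F)
    (hwstar : wstar ∈ W)
    (hopt : ∃ v : EuclideanSpace ℝ (Fin d),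
      (∀ u, r what + (inner ℝ v (u - what) : ℝ) ≤ r u) ∧
      ∀ w ∈ W, 0 ≤ (inner ℝ (gradient Fn what + v) (w - what) : ℝ)) :
    (F what + r what) - (F wstar + r wstar) ≤
      (‖gradient F what - gradient F wstar - (gradient Fn what - gradient Fn wstar)‖ +
        ‖gradient F wstar - gradient Fn wstar‖) * ‖what - wstar‖ := by
  obtain ⟨v, hv, hvW⟩ := hopt
  calc (F what + r what) - (F wstar + r wstar)
      ≤ ⟪gradient F what - gradient Fn what, what - wstar⟫_ℝ :=
        sub_le_inner_of_subgradient_of_variational_ineq hFconv (Set.mem_univ _)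
          (Set.mem_univ _) (hF what) (hv wstar) (hvW wstar hwstar)
    _ ≤ _ := inner_sub_le_norm_sub_sub_add_norm_mul _ _ _ _ _

theorem stmt11 {d : ℕ} (W : Set (EuclideanSpace ℝ (Fin d)))
    (F Fn r : EuclideanSpace ℝ (Fin d) → ℝ)
    (what wstar : EuclideanSpace ℝ (Fin d))
    (hW : Convex ℝ W) (hWc : IsClosed W)
    (hF : Differentiable ℝ F) (hFn : Differentiable ℝ Fn)
    (hFconv : ConvexOn ℝ Set.univ F) (hFnconv : ConvexOn ℝ Set.univ Fn)
    (hrconv : ConvexOn ℝ Set.univ r)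
    (hwhat : what ∈ W) (hwstar : wstar ∈ W)
    (hopt : ∃ v : EuclideanSpace ℝ (Fin d),
      (∀ u, r what + (inner ℝ v (u - what) : ℝ) ≤ r u) ∧
      ∀ w ∈ W, 0 ≤ (inner ℝ (gradient Fn what + v) (w - what) : ℝ))
    (hminn : ∀ w ∈ W, Fn what + r what ≤ Fn w + r w)
    (hmin : ∀ w ∈ W, F wstar + r wstar ≤ F w + r w)
    (hclosest : ∀ u ∈ W, F u + r u = F wstar + r wstar → ‖what - wstar‖ ≤ ‖what - u‖) :
    (F what + r what) - (F wstar + r wstar) ≤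
      (‖gradient F what - gradient F wstar - (gradient Fn what - gradient Fn wstar)‖ +
        ‖gradient F wstar - gradient Fn wstar‖) * ‖what - wstar‖ :=
  stmt11_general W F Fn r what wstar hF hFconv hwstar hopt
end

section
/- Let f(w,z) = (w - z)²/2 with w ∈ ℝ and z ∼ N(v, 1) normal with mean v. Then P(w) = E_z[f(w,z)] = (w - v)²/2 + 1/2, the unique minimizer is w* = v, and ‖w - w*‖² = (w-v)² = 2(P(w) - P(w*)), so EBC(θ = 1, α = 2) holds on all of ℝ. Moreover, for every B ≥ 1 there exists w with |w| > √(32B) such that the (1,B)-Bernstein condition E_z[(f(w,z) - f(w*,z))²] ≤ B · E_z[f(w,z) - f(w*,z)] fails. -/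
open MeasureTheory ProbabilityTheory

open scoped NNReal

/-!
Writing `z = μ + y`, every quantity in sight is the integral of a quadratic polynomial in `y`
against `gaussianReal μ v`, which only depends on `E y = 0` and `E y² = v`. The excess risk of `w`
is `(w - μ)² / 2`, while its second moment is `(w - μ)⁴ / 4 + v (w - μ)²`: their ratio grows
like `(w - μ)² / 2`, so the `(1, B)`-Bernstein condition fails as soon as `(w - μ)² > 2 B`.
-/

section GaussianQuadratic

variable (μ : ℝ) (v : ℝ≥0)

lemma integral_sub_mean_sq_gaussianReal : ∫ x, (x - μ) ^ 2 ∂gaussianReal μ v = v := by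
  simpa only [variance_eq_integral measurable_id'.aemeasurable, integral_id_gaussianReal]
    using variance_fun_id_gaussianReal (μ := μ) (v := v)

lemma integral_sub_mean_gaussianReal : ∫ x, (x - μ) ∂gaussianReal μ v = 0 := by
  have hid : Integrable (fun x => x) (gaussianReal μ v) :=
    (memLp_id_gaussianReal 1).integrable le_rfl
  simp [integral_sub hid (integrable_const μ)]

lemma integral_quadratic_gaussianReal (a b c : ℝ) :
    ∫ x, (a * (x - μ) ^ 2 + b * (x - μ) + c) ∂gaussianReal μ v = a * v + c := by
  have hX : MemLp (fun x => x - μ) 2 (gaussianReal μ v) :=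
    (memLp_id_gaussianReal 2).sub (memLp_const μ)
  have hsq : Integrable (fun x => a * (x - μ) ^ 2) (gaussianReal μ v) :=
    hX.integrable_sq.const_mul a
  have hlin : Integrable (fun x => b * (x - μ)) (gaussianReal μ v) :=
    (hX.integrable one_le_two).const_mul b
  rw [integral_add (hsq.fun_add hlin) (integrable_const c), integral_add hsq hlin,
    integral_const_mul, integral_const_mul, integral_sub_mean_sq_gaussianReal,
    integral_sub_mean_gaussianReal]
  simp

end GaussianQuadratic

noncomputable def squareLoss (w z : ℝ) : ℝ := (w - z) ^ 2 / 2

section SquareLossGaussian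

variable (μ : ℝ) (v : ℝ≥0) (w : ℝ)

lemma integral_squareLoss_gaussianReal :
    ∫ z, squareLoss w z ∂gaussianReal μ v = (w - μ) ^ 2 / 2 + v / 2 := by
  have h z : squareLoss w z = 1 / 2 * (z - μ) ^ 2 + (μ - w) * (z - μ) + (w - μ) ^ 2 / 2 := by
    unfold squareLoss; ring
  simp_rw [h, integral_quadratic_gaussianReal]
  ring

lemma integral_squareLoss_sub_gaussianReal :
    ∫ z, (squareLoss w z - squareLoss μ z) ∂gaussianReal μ v = (w - μ) ^ 2 / 2 := by
  have h z : squareLoss w z - squareLoss μ z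
      = 0 * (z - μ) ^ 2 + (μ - w) * (z - μ) + (w - μ) ^ 2 / 2 := by
    unfold squareLoss; ring
  simp_rw [h, integral_quadratic_gaussianReal]
  ring

lemma integral_sq_squareLoss_sub_gaussianReal :
    ∫ z, (squareLoss w z - squareLoss μ z) ^ 2 ∂gaussianReal μ v
      = (w - μ) ^ 4 / 4 + v * (w - μ) ^ 2 := by
  have h z : (squareLoss w z - squareLoss μ z) ^ 2
      = (w - μ) ^ 2 * (z - μ) ^ 2 + (-(w - μ) ^ 3) * (z - μ) + (w - μ) ^ 4 / 4 := by
    unfold squareLoss; ring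
  simp_rw [h, integral_quadratic_gaussianReal]
  ring

lemma not_bernstein_squareLoss_gaussianReal {B : ℝ} (hB : 0 ≤ B) (hw : 2 * B < (w - μ) ^ 2) :
    ¬ ∫ z, (squareLoss w z - squareLoss μ z) ^ 2 ∂gaussianReal μ v
        ≤ B * ∫ z, (squareLoss w z - squareLoss μ z) ∂gaussianReal μ v := by
  rw [integral_sq_squareLoss_sub_gaussianReal, integral_squareLoss_sub_gaussianReal, not_le]
  have hv : (0 : ℝ) ≤ v := v.2
  nlinarith [mul_nonneg hv (sq_nonneg (w - μ))]

end SquareLossGaussian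

theorem stmt17 (v : ℝ) (f : ℝ → ℝ → ℝ)
    (hf : ∀ w z, f w z = (w - z) ^ 2 / 2)
    (P : ℝ → ℝ)
    (hP : ∀ w, P w = ∫ z, f w z ∂(gaussianReal v 1)) :
    (∀ w, P w = (w - v) ^ 2 / 2 + 1 / 2) ∧
    (∀ w, P v ≤ P w) ∧
    (∀ w, P w = P v → w = v) ∧
    (∀ w, (w - v) ^ 2 = 2 * (P w - P v)) ∧
    (∀ B : ℝ, 1 ≤ B → ∃ w : ℝ, Real.sqrt (32 * B) < |w| ∧
      ¬ (∫ z, (f w z - f v z) ^ 2 ∂(gaussianReal v 1) ≤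
          B * ∫ z, (f w z - f v z) ∂(gaussianReal v 1))) := by
  obtain rfl : f = squareLoss := funext₂ hf
  have hrisk w : P w = (w - v) ^ 2 / 2 + 1 / 2 := by
    rw [hP, integral_squareLoss_gaussianReal, NNReal.coe_one]
  refine ⟨hrisk, fun w => ?_, fun w hw => ?_, fun w => ?_, fun B hB => ?_⟩
  · rw [hrisk, hrisk]
    nlinarith [sq_nonneg (w - v)]
  · rw [hrisk, hrisk] at hw
    nlinarith [sq_nonneg (w - v)]
  · rw [hrisk, hrisk]
    ring
  · have hsqrt := Real.sq_sqrt (show 0 ≤ 32 * B by linarith)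
    refine ⟨|v| + Real.sqrt (32 * B) + 1, ?_,
      not_bernstein_squareLoss_gaussianReal v 1 _ (by linarith) ?_⟩
    · rw [abs_of_nonneg (by positivity)]
      linarith [abs_nonneg v]
    · nlinarith [le_abs_self v, Real.sqrt_nonneg (32 * B)]
end
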